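/- arXiv:1506.07391 — 6 statements merged into one kernel-verified Lean document; each statement's English description precedes it below -/
import Mathlib

section
/- If f : [0,∞) → ℝ is s-convex in the second sense for some s ∈ (0,1), i.e. f(λu + (1-λ)v) ≤ λ^s f(u) + (1-λ)^s f(v) for all u,v ≥ 0 and λ ∈ [0,1], and f is continuous on [a,b] with 0 ≤ a < b, then 2^(s-1) · f((a+b)/2) ≤ (1/(b-a)) ∫_a^b f(x) dx. -/
theorem sconvex_hermite_hadamard_left
    (s a b : ℝ) (hs : s ∈ Set.Ioo (0:ℝ) 1) (ha : 0 ≤ a) (hab : a < b)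
    (f : ℝ → ℝ)
    (hsconv : ∀ u v : ℝ, 0 ≤ u → 0 ≤ v → ∀ l ∈ Set.Icc (0:ℝ) 1,
      f (l * u + (1 - l) * v) ≤ l ^ s * f u + (1 - l) ^ s * f v)
    (hcont : ContinuousOn f (Set.Icc a b)) :
    (2:ℝ) ^ (s - 1) * f ((a + b) / 2) ≤ (1 / (b - a)) * ∫ x in a..b, f x := by
  have hba : (0:ℝ) < b - a := sub_pos.mpr hab
  have hle : a ≤ b := hab.le
  -- integrability of f and of x ↦ f (a + b - x)
  have hint : IntervalIntegrable f MeasureTheory.volume a b :=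
    hcont.intervalIntegrable_of_Icc hle
  have hcont2 : ContinuousOn (fun x => f (a + b - x)) (Set.Icc a b) := by
    apply hcont.comp (Continuous.continuousOn (by continuity))
    intro x hx
    exact ⟨by linarith [hx.2], by linarith [hx.1]⟩
  have hint2 : IntervalIntegrable (fun x => f (a + b - x)) MeasureTheory.volume a b :=
    hcont2.intervalIntegrable_of_Icc hle
  -- pointwise inequality
  have hpt : ∀ x ∈ Set.Icc a b,
      f ((a + b) / 2) ≤ ((1:ℝ)/2) ^ s * f x + ((1:ℝ)/2) ^ s * f (a + b - x) := by
    intro x hx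
    have h1 : (0:ℝ) ≤ x := le_trans ha hx.1
    have h2 : (0:ℝ) ≤ a + b - x := by linarith [hx.2]
    have hl : (1:ℝ)/2 ∈ Set.Icc (0:ℝ) 1 := by norm_num
    have := hsconv x (a + b - x) h1 h2 (1/2) hl
    have heq : (1:ℝ)/2 * x + (1 - 1/2) * (a + b - x) = (a + b) / 2 := by ring
    rw [heq] at this
    calc f ((a + b) / 2) ≤ ((1:ℝ)/2) ^ s * f x + (1 - 1/2 : ℝ) ^ s * f (a + b - x) := this
      _ = ((1:ℝ)/2) ^ s * f x + ((1:ℝ)/2) ^ s * f (a + b - x) := by norm_num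
  -- integrate the pointwise inequality over [a,b]
  have hmono : ∫ x in a..b, f ((a + b) / 2)
      ≤ ∫ x in a..b, (((1:ℝ)/2) ^ s * f x + ((1:ℝ)/2) ^ s * f (a + b - x)) := by
    apply intervalIntegral.integral_mono_on hle
    · exact intervalIntegrable_const
    · exact (hint.const_mul _).add (hint2.const_mul _)
    · exact hpt
  have hrefl : ∫ x in a..b, f (a + b - x) = ∫ x in a..b, f x := by
    have := intervalIntegral.integral_comp_sub_left f (a + b) (a := a) (b := b)
    simpa using this
  have hc : ∫ x in a..b, f ((a + b) / 2) = (b - a) * f ((a + b) / 2) := by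
    simp [smul_eq_mul]
  rw [hc, intervalIntegral.integral_add (hint.const_mul _) (hint2.const_mul _),
    intervalIntegral.integral_const_mul, intervalIntegral.integral_const_mul, hrefl] at hmono
  -- hmono : (b-a) * f m ≤ (1/2)^s * I + (1/2)^s * I
  set I := ∫ x in a..b, f x with hI
  have hkey : (b - a) * f ((a + b) / 2) ≤ 2 * ((1:ℝ)/2) ^ s * I := by
    nlinarith [hmono]
  -- multiply by 2^(s-1)/(b-a)
  have h2s : (0:ℝ) < (2:ℝ) ^ (s - 1) := Real.rpow_pos_of_pos (by norm_num) _
  have hhalf : ((1:ℝ)/2) ^ s = (2:ℝ) ^ (-s) := by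
    rw [one_div, ← Real.rpow_neg_one 2, ← Real.rpow_mul (by norm_num : (0:ℝ) ≤ 2)]
    norm_num
  have hprod : (2:ℝ) ^ (s - 1) * (2 * ((1:ℝ)/2) ^ s) = 1 := by
    rw [hhalf]
    have h2 : (2:ℝ) = (2:ℝ) ^ (1:ℝ) := (Real.rpow_one 2).symm
    calc (2:ℝ) ^ (s - 1) * (2 * (2:ℝ) ^ (-s))
        = (2:ℝ) ^ (s - 1) * ((2:ℝ) ^ (1:ℝ) * (2:ℝ) ^ (-s)) := by rw [← h2]
      _ = (2:ℝ) ^ (s - 1 + (1 + -s)) := by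
          rw [← Real.rpow_add (by norm_num : (0:ℝ) < 2), ← Real.rpow_add (by norm_num : (0:ℝ) < 2)]
      _ = 1 := by rw [show s - 1 + (1 + -s) = (0:ℝ) by ring, Real.rpow_zero]
  have step2 : (2:ℝ) ^ (s - 1) * ((b - a) * f ((a + b) / 2)) ≤ I := by
    calc (2:ℝ) ^ (s - 1) * ((b - a) * f ((a + b) / 2))
        ≤ (2:ℝ) ^ (s - 1) * (2 * ((1:ℝ)/2) ^ s * I) := mul_le_mul_of_nonneg_left hkey h2s.le
      _ = ((2:ℝ) ^ (s - 1) * (2 * ((1:ℝ)/2) ^ s)) * I := by ring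
      _ = I := by rw [hprod, one_mul]
  rw [div_mul_eq_mul_div, le_div_iff₀ hba]
  calc (2:ℝ) ^ (s - 1) * f ((a + b) / 2) * (b - a)
      = (2:ℝ) ^ (s - 1) * ((b - a) * f ((a + b) / 2)) := by ring
    _ ≤ I := step2
    _ = 1 * I := (one_mul I).symm
end

section
/- If f : [0,∞) → ℝ is s-convex in the second sense for some s ∈ (0,1), and f is continuous on [a,b] with 0 ≤ a < b, then (1/(b-a)) ∫_a^b f(x) dx ≤ (f(a) + f(b))/(s+1). -/
/-!
Writing `x ∈ [a, b]` as `λ a + (1 - λ) b` with `λ = (b - x) / (b - a)`, s-convexity bounds `f x` by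
`λ ^ s f a + (1 - λ) ^ s f b`; integrating this bound over `[a, b]` gives `(b - a) (f a + f b) / (s + 1)`,
because `∫₀¹ t ^ s dt = 1 / (s + 1)`.
-/

open Set intervalIntegral

theorem integral_rpow_div_sub_div {s a b : ℝ} (hs : -1 < s) (hab : a ≠ b) :
    ∫ x in a..b, ((x - a) / (b - a)) ^ s = (b - a) / (s + 1) := by
  have hba : b - a ≠ 0 := sub_ne_zero.2 hab.symm
  simp_rw [sub_div _ a]
  rw [integral_comp_div_sub (fun t => t ^ s) hba, sub_self, ← sub_div, div_self hba,
    integral_rpow (Or.inl hs), Real.one_rpow, Real.zero_rpow (by linarith), smul_eq_mul]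
  ring

theorem integral_rpow_sub_div_sub {s a b : ℝ} (hs : -1 < s) (hab : a ≠ b) :
    ∫ x in a..b, ((b - x) / (b - a)) ^ s = (b - a) / (s + 1) := by
  have h := integral_rpow_div_sub_div hs hab.symm
  simp_rw [← neg_div_neg_eq (_ - b), neg_sub] at h
  rw [integral_symm, h, div_neg, neg_neg]

theorem integral_rpow_interpolation {s a b : ℝ} (hs : 0 ≤ s) (hab : a ≠ b) (p q : ℝ) :
    ∫ x in a..b, (((b - x) / (b - a)) ^ s * p + ((x - a) / (b - a)) ^ s * q) =
      (b - a) / (s + 1) * (p + q) := by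
  have hrpow := Real.continuous_rpow_const hs
  have hs' : -1 < s := by linarith
  rw [integral_add ((by fun_prop : Continuous _).intervalIntegrable a b)
      ((by fun_prop : Continuous _).intervalIntegrable a b),
    integral_mul_const, integral_mul_const,
    integral_rpow_sub_div_sub hs' hab, integral_rpow_div_sub_div hs' hab]
  ring

theorem le_rpow_mul_add_rpow_mul_of_sconvex {s a b x : ℝ} {f : ℝ → ℝ} (hab : a < b)
    (hf : ∀ l ∈ Icc (0:ℝ) 1, f (l * a + (1 - l) * b) ≤ l ^ s * f a + (1 - l) ^ s * f b)
    (hx : x ∈ Icc a b) :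
    f x ≤ ((b - x) / (b - a)) ^ s * f a + ((x - a) / (b - a)) ^ s * f b := by
  have hba : 0 < b - a := sub_pos.2 hab
  have hl : (b - x) / (b - a) ∈ Icc (0:ℝ) 1 :=
    ⟨div_nonneg (by linarith [hx.2]) hba.le, (div_le_one hba).2 (by linarith [hx.1])⟩
  have h1l : 1 - (b - x) / (b - a) = (x - a) / (b - a) := by field_simp; ring
  have hcomb : (b - x) / (b - a) * a + (x - a) / (b - a) * b = x := by field_simp; ring
  simpa only [h1l, hcomb] using hf _ hl

theorem sconvex_hermite_hadamard_right
    (s a b : ℝ) (hs : s ∈ Set.Ioo (0:ℝ) 1) (ha : 0 ≤ a) (hab : a < b)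
    (f : ℝ → ℝ)
    (hsconv : ∀ u v : ℝ, 0 ≤ u → 0 ≤ v → ∀ l ∈ Set.Icc (0:ℝ) 1,
      f (l * u + (1 - l) * v) ≤ l ^ s * f u + (1 - l) ^ s * f v)
    (hcont : ContinuousOn f (Set.Icc a b)) :
    (1 / (b - a)) * ∫ x in a..b, f x ≤ (f a + f b) / (s + 1) := by
  have hba : 0 < b - a := sub_pos.2 hab
  have hrpow := Real.continuous_rpow_const hs.1.le
  have hint : ∫ x in a..b, f x ≤ (b - a) / (s + 1) * (f a + f b) :=
    calc ∫ x in a..b, f x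
        ≤ ∫ x in a..b, (((b - x) / (b - a)) ^ s * f a + ((x - a) / (b - a)) ^ s * f b) :=
          integral_mono_on hab.le (hcont.intervalIntegrable_of_Icc hab.le)
            ((by fun_prop : Continuous _).intervalIntegrable a b)
            fun x hx => le_rpow_mul_add_rpow_mul_of_sconvex hab
              (hsconv a b ha (ha.trans hab.le)) hx
      _ = (b - a) / (s + 1) * (f a + f b) := integral_rpow_interpolation hs.1.le hab.ne _ _
  calc 1 / (b - a) * ∫ x in a..b, f x ≤ 1 / (b - a) * ((b - a) / (s + 1) * (f a + f b)) := by
        gcongr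
    _ = (f a + f b) / (s + 1) := by field_simp
end

section
/- Let f : ℝ → ℝ be differentiable on an open interval containing [a,b] ⊆ [0,∞) with a < b, and suppose |f'| is s-convex in the second sense on [a,b] for some fixed s ∈ (0,1). Then |(f(a)+f(b))/2 - (1/(b-a)) ∫_a^b f(x) dx| ≤ ((b-a)/2) · (1/(s+1) + ((1/2)^s - 2)/((s+1)(s+2))) · (|f'(a)| + |f'(b)|). -/
/-!
Integrating by parts and substituting `x = t a + (1 - t) b` gives the identity
`(f a + f b) / 2 - (1 / (b - a)) ∫_a^b f = (b - a) / 2 ∫_0^1 (1 - 2t) f'(t a + (1 - t) b) dt`.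
Bounding `|f'(t a + (1 - t) b)|` by `t^s |f' a| + (1 - t)^s |f' b|` leaves the two weights
`∫_0^1 |1 - 2t| t^s dt = ∫_0^1 |1 - 2t| (1 - t)^s dt` (swapped by `t ↦ 1 - t`), and splitting
at `t = 1/2` evaluates them to the constant of the statement.
-/

open MeasureTheory Set intervalIntegral

theorem abs_le_abs_add_abs_of_sconvex {φ : ℝ → ℝ} {a b s : ℝ} (hs : 0 ≤ s) (hab : a ≤ b)
    (hφ : ∀ t ∈ Icc (0:ℝ) 1, |φ (t * a + (1 - t) * b)| ≤ t ^ s * |φ a| + (1 - t) ^ s * |φ b|) :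
    ∀ x ∈ Icc a b, |φ x| ≤ |φ a| + |φ b| := by
  intro x hx
  rw [← segment_eq_Icc hab] at hx
  obtain ⟨t, q, ht, hq, htq, rfl⟩ := hx
  obtain rfl : q = 1 - t := by linarith
  have h₁ : t ^ s ≤ 1 := Real.rpow_le_one ht (by linarith) hs
  have h₂ : (1 - t) ^ s ≤ 1 := Real.rpow_le_one hq (by linarith) hs
  calc |φ (t • a + (1 - t) • b)| ≤ t ^ s * |φ a| + (1 - t) ^ s * |φ b| := hφ t ⟨ht, by linarith⟩
    _ ≤ |φ a| + |φ b| := by gcongr <;> nlinarith [abs_nonneg (φ a), abs_nonneg (φ b)]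

theorem intervalIntegrable_of_hasDerivAt_of_abs_le {f f' : ℝ → ℝ} {a b M : ℝ}
    (hf : ∀ x ∈ uIcc a b, HasDerivAt f (f' x) x) (hM : ∀ x ∈ uIcc a b, |f' x| ≤ M) :
    IntervalIntegrable f' volume a b := by
  have heq : EqOn (deriv f) f' (uIcc a b) := fun x hx => (hf x hx).deriv
  have hderiv : IntervalIntegrable (deriv f) volume a b := by
    rw [intervalIntegrable_iff]
    refine Measure.integrableOn_of_bounded (M := M) measure_Ioc_lt_top.ne
      (measurable_deriv f).aestronglyMeasurable ?_
    refine ae_restrict_of_forall_mem measurableSet_uIoc fun x hx => ?_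
    rw [Real.norm_eq_abs, heq (uIoc_subset_uIcc hx)]
    exact hM x (uIoc_subset_uIcc hx)
  exact hderiv.congr_ae
    (ae_restrict_of_forall_mem measurableSet_uIoc fun x hx => heq (uIoc_subset_uIcc hx))

theorem integral_eq_sub_mul_integral_segment (h : ℝ → ℝ) (a b : ℝ) :
    ∫ x in a..b, h x = (b - a) * ∫ t in (0:ℝ)..1, h (t * a + (1 - t) * b) := by
  have hcomp := smul_integral_comp_mul_add (f := h) (a := 0) (b := 1) (a - b) b
  simp only [mul_zero, zero_add, mul_one, sub_add_cancel, smul_eq_mul] at hcomp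
  simp_rw [integral_symm b, ← hcomp, show ∀ t : ℝ, t * a + (1 - t) * b = (a - b) * t + b from
    fun t => by ring]
  ring

theorem trapezoid_sub_average_eq {f f' : ℝ → ℝ} {a b : ℝ} (hab : a ≠ b)
    (hf : ∀ x ∈ uIcc a b, HasDerivAt f (f' x) x) (hf' : IntervalIntegrable f' volume a b) :
    (f a + f b) / 2 - 1 / (b - a) * ∫ x in a..b, f x
      = (b - a) / 2 * ∫ t in (0:ℝ)..1, (1 - 2 * t) * f' (t * a + (1 - t) * b) := by
  have hparts : ∫ x in a..b, (x - (a + b) / 2) * f' x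
      = (b - a) / 2 * (f a + f b) - ∫ x in a..b, f x := by
    rw [integral_mul_deriv_eq_deriv_mul (fun x _ => (hasDerivAt_id' x).sub_const _) hf
      intervalIntegrable_const hf']
    simp only [one_mul]
    ring
  have hsubst : ∫ x in a..b, (x - (a + b) / 2) * f' x
      = (b - a) ^ 2 / 2 * ∫ t in (0:ℝ)..1, (1 - 2 * t) * f' (t * a + (1 - t) * b) := by
    rw [integral_eq_sub_mul_integral_segment, ← intervalIntegral.integral_const_mul,
      ← intervalIntegral.integral_const_mul]
    congr 1 with t
    ring
  have hba : b - a ≠ 0 := sub_ne_zero.mpr hab.symm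
  generalize ∫ x in a..b, f x = I at hparts ⊢
  generalize ∫ t in (0:ℝ)..1, (1 - 2 * t) * f' (t * a + (1 - t) * b) = J at hsubst ⊢
  rw [hsubst] at hparts
  field_simp
  linear_combination -2 * hparts

theorem integral_abs_one_sub_two_mul_mul_rpow {s : ℝ} (hs : -1 < s) :
    ∫ t in (0:ℝ)..1, |1 - 2 * t| * t ^ s
      = 1 / (s + 1) + ((1 / 2 : ℝ) ^ s - 2) / ((s + 1) * (s + 2)) := by
  have hs1 : s + 1 ≠ 0 := by linarith
  have hs2 : s + 2 ≠ 0 := by linarith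
  have hpow (t : ℝ) (ht : 0 ≤ t) : t ^ s - 2 * t ^ (s + 1) = (1 - 2 * t) * t ^ s := by
    rw [Real.rpow_add_one' ht hs1]; ring
  have hint (p q : ℝ) : IntervalIntegrable (fun t : ℝ => |1 - 2 * t| * t ^ s) volume p q :=
    (intervalIntegrable_rpow' hs).continuousOn_mul (by fun_prop)
  have hF (p q : ℝ) : ∫ t in p..q, (t ^ s - 2 * t ^ (s + 1))
      = (q ^ (s + 1) - p ^ (s + 1)) / (s + 1) - 2 * ((q ^ (s + 2) - p ^ (s + 2)) / (s + 2)) := by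
    rw [integral_sub (intervalIntegrable_rpow' hs)
      ((intervalIntegrable_rpow' (by linarith)).const_mul 2), intervalIntegral.integral_const_mul,
      integral_rpow (Or.inl hs), integral_rpow (Or.inl (by linarith))]
    ring_nf
  have hlo : ∫ t in (0:ℝ)..(1 / 2), |1 - 2 * t| * t ^ s
      = ∫ t in (0:ℝ)..(1 / 2), (t ^ s - 2 * t ^ (s + 1)) := by
    refine integral_congr fun t ht => ?_
    rw [uIcc_of_le (by norm_num)] at ht
    rw [hpow t ht.1, abs_of_nonneg (by linarith [ht.2])]
  have hhi : ∫ t in (1 / 2 : ℝ)..1, |1 - 2 * t| * t ^ s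
      = -∫ t in (1 / 2 : ℝ)..1, (t ^ s - 2 * t ^ (s + 1)) := by
    rw [← intervalIntegral.integral_neg]
    refine integral_congr fun t ht => ?_
    rw [uIcc_of_le (by norm_num)] at ht
    rw [hpow t (by linarith [ht.1]), abs_of_nonpos (by linarith [ht.1])]
    ring
  have hhalf (r : ℝ) (hr : r + s ≠ 0) : (1 / 2 : ℝ) ^ (s + r) = (1 / 2) ^ s * (1 / 2) ^ r := by
    rw [Real.rpow_add' (by norm_num) (by rwa [add_comm])]
  rw [← integral_add_adjacent_intervals (hint 0 (1 / 2)) (hint (1 / 2) 1), hlo, hhi, hF, hF,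
    hhalf 1 (by linarith), hhalf 2 (by linarith), Real.zero_rpow hs1, Real.zero_rpow hs2,
    Real.one_rpow, Real.one_rpow]
  field_simp
  ring

theorem integral_abs_one_sub_two_mul_mul_one_sub_rpow {s : ℝ} (hs : -1 < s) :
    ∫ t in (0:ℝ)..1, |1 - 2 * t| * (1 - t) ^ s
      = 1 / (s + 1) + ((1 / 2 : ℝ) ^ s - 2) / ((s + 1) * (s + 2)) := by
  have hreflect := integral_comp_sub_left (fun t : ℝ => |1 - 2 * t| * t ^ s) (a := 0) (b := 1) 1
  simp only [sub_zero, sub_self] at hreflect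
  rw [← integral_abs_one_sub_two_mul_mul_rpow hs, ← hreflect]
  refine integral_congr fun t _ => ?_
  rw [show 1 - 2 * (1 - t) = -(1 - 2 * t) by ring, abs_neg]

theorem abs_integral_one_sub_two_mul_mul_le {φ : ℝ → ℝ} {s A B : ℝ} (hs : -1 < s)
    (hφ : ∀ t ∈ Icc (0:ℝ) 1, |φ t| ≤ t ^ s * A + (1 - t) ^ s * B) :
    |∫ t in (0:ℝ)..1, (1 - 2 * t) * φ t|
      ≤ (1 / (s + 1) + ((1 / 2 : ℝ) ^ s - 2) / ((s + 1) * (s + 2))) * (A + B) := by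
  have hint₁ : IntervalIntegrable (fun t : ℝ => |1 - 2 * t| * t ^ s * A) volume 0 1 :=
    ((intervalIntegrable_rpow' hs).continuousOn_mul (by fun_prop)).mul_const A
  have hint₂ : IntervalIntegrable (fun t : ℝ => |1 - 2 * t| * (1 - t) ^ s * B) volume 0 1 := by
    refine (IntervalIntegrable.continuousOn_mul ?_ (by fun_prop)).mul_const B
    simpa using (intervalIntegrable_rpow' hs (a := 0) (b := 1)).comp_sub_left 1 |>.symm
  calc |∫ t in (0:ℝ)..1, (1 - 2 * t) * φ t|
      ≤ ∫ t in (0:ℝ)..1, (|1 - 2 * t| * t ^ s * A + |1 - 2 * t| * (1 - t) ^ s * B) := by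
        rw [← Real.norm_eq_abs]
        refine norm_integral_le_of_norm_le zero_le_one (Filter.Eventually.of_forall
          fun t ht => ?_) (hint₁.add hint₂)
        rw [norm_mul, Real.norm_eq_abs, mul_assoc, mul_assoc, ← mul_add]
        exact mul_le_mul_of_nonneg_left (hφ t (Ioc_subset_Icc_self ht)) (abs_nonneg _)
    _ = (1 / (s + 1) + ((1 / 2 : ℝ) ^ s - 2) / ((s + 1) * (s + 2))) * (A + B) := by
        rw [integral_add hint₁ hint₂, intervalIntegral.integral_mul_const,
          intervalIntegral.integral_mul_const, integral_abs_one_sub_two_mul_mul_rpow hs,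
          integral_abs_one_sub_two_mul_mul_one_sub_rpow hs]
        ring

theorem sconvex_trapezoid_bound_q_one_general
    (s a b c d : ℝ) (hs : s ∈ Set.Ioo (0:ℝ) 1) (hab : a < b)
    (hsub : Set.Icc a b ⊆ Set.Ioo c d)
    (f f' : ℝ → ℝ)
    (hdiff : ∀ x ∈ Set.Ioo c d, HasDerivAt f (f' x) x)
    (hsconv : ∀ u ∈ Set.Icc a b, ∀ v ∈ Set.Icc a b, ∀ t ∈ Set.Icc (0:ℝ) 1,
      |f' (t * u + (1 - t) * v)| ≤ t ^ s * |f' u| + (1 - t) ^ s * |f' v|) :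
    |(f a + f b) / 2 - (1 / (b - a)) * ∫ x in a..b, f x|
      ≤ ((b - a) / 2) * (1 / (s + 1) + ((1 / 2 : ℝ) ^ s - 2) / ((s + 1) * (s + 2)))
        * (|f' a| + |f' b|) := by
  have hseg := hsconv a (left_mem_Icc.2 hab.le) b (right_mem_Icc.2 hab.le)
  rw [← uIcc_of_le hab.le] at hsub
  have hf : ∀ x ∈ uIcc a b, HasDerivAt f (f' x) x := fun x hx => hdiff x (hsub hx)
  have hf' : IntervalIntegrable f' volume a b :=
    intervalIntegrable_of_hasDerivAt_of_abs_le hf fun x hx =>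
      abs_le_abs_add_abs_of_sconvex hs.1.le hab.le hseg x (uIcc_of_le hab.le ▸ hx)
  rw [trapezoid_sub_average_eq hab.ne hf hf', abs_mul, abs_of_pos (by linarith), mul_assoc]
  gcongr
  exact abs_integral_one_sub_two_mul_mul_le (by linarith [hs.1]) hseg

theorem sconvex_trapezoid_bound_q_one
    (s a b c d : ℝ) (hs : s ∈ Set.Ioo (0:ℝ) 1) (ha : 0 ≤ a) (hab : a < b)
    (hsub : Set.Icc a b ⊆ Set.Ioo c d)
    (f f' : ℝ → ℝ)
    (hdiff : ∀ x ∈ Set.Ioo c d, HasDerivAt f (f' x) x)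
    (hsconv : ∀ u ∈ Set.Icc a b, ∀ v ∈ Set.Icc a b, ∀ t ∈ Set.Icc (0:ℝ) 1,
      |f' (t * u + (1 - t) * v)| ≤ t ^ s * |f' u| + (1 - t) ^ s * |f' v|) :
    |(f a + f b) / 2 - (1 / (b - a)) * ∫ x in a..b, f x|
      ≤ ((b - a) / 2) * (1 / (s + 1) + ((1 / 2 : ℝ) ^ s - 2) / ((s + 1) * (s + 2)))
        * (|f' a| + |f' b|) :=
  sconvex_trapezoid_bound_q_one_general s a b c d hs hab hsub f f' hdiff hsconv
end

section
/- Let f : ℝ → ℝ be differentiable on an open interval containing [a,b] ⊆ [0,∞) with a < b, let q > 1 and s ∈ (0,1), and suppose |f'|^q is s-convex in the second sense on [a,b]. Then |(f(a)+f(b))/2 - (1/(b-a)) ∫_a^b f(x) dx| ≤ ((b-a)/2) · (1/2)^((q-1)/q) · (1/(s+1) + ((1/2)^s - 2)/((s+1)(s+2)))^(1/q) · (|f'(a)|^q + |f'(b)|^q)^(1/q). -/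
/-! Substituting `x = (b - a) t + a` and integrating by parts against `2t - 1` gives
`(f a + f b) / 2 - (1 / (b - a)) ∫ₐᵇ f = (b - a) / 2 ∫₀¹ (2t - 1) f'((b - a) t + a) dt`.
Hölder's inequality with weight `|2t - 1|`, whose integral is `1 / 2`, bounds the modulus of the
last integral by `(1 / 2)^(1 - 1/q) (∫₀¹ |2t - 1| |f'((b - a) t + a)|^q dt)^(1/q)`, and
s-convexity of `|f'|^q` bounds the integrand pointwise by
`|2t - 1| (t^s |f' b|^q + (1 - t)^s |f' a|^q)`, whose integral is computed in closed form. -/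

open MeasureTheory Set

theorem integral_mul_le_weight_mul_Lp_of_nonneg {α : Type*} [MeasurableSpace α]
    {μ : Measure α} {p : ℝ} (hp : 1 < p) {w f : α → ℝ} (hw : ∀ x, 0 ≤ w x) (hf : ∀ x, 0 ≤ f x)
    (hw_int : Integrable w μ) (hf_meas : AEStronglyMeasurable f μ)
    (hwf_int : Integrable (fun x => w x * f x ^ p) μ) :
    ∫ x, w x * f x ∂μ ≤ (∫ x, w x ∂μ) ^ (1 - p⁻¹) * (∫ x, w x * f x ^ p ∂μ) ^ p⁻¹ := by
  have hpq : p.conjExponent.HolderConjugate p := (Real.HolderConjugate.conjExponent hp).symm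
  set r := p.conjExponent
  have hr : 0 < r := hpq.pos
  have hp0 : 0 < p := hpq.symm.pos
  have hw_pow : ∀ {e : ℝ}, 0 < e → (fun x => (w x ^ e⁻¹) ^ e) = w := fun he =>
    funext fun x => Real.rpow_inv_rpow (hw x) he.ne'
  have hwf_pow : (fun x => (w x ^ p⁻¹ * f x) ^ p) = fun x => w x * f x ^ p :=
    funext fun x => by
      rw [Real.mul_rpow (Real.rpow_nonneg (hw x) _) (hf x), Real.rpow_inv_rpow (hw x) hp0.ne']
  have hmeas : ∀ {e : ℝ}, 0 < e → AEStronglyMeasurable (fun x => w x ^ e) μ := fun he =>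
    (Real.continuous_rpow_const he.le).comp_aestronglyMeasurable hw_int.aestronglyMeasurable
  have hmem_w : MemLp (fun x => w x ^ r⁻¹) (ENNReal.ofReal r) μ := by
    rw [← integrable_norm_rpow_iff (hmeas (inv_pos.2 hr)) (by simpa using hr) ENNReal.ofReal_ne_top,
      ENNReal.toReal_ofReal hr.le]
    simpa [Real.norm_of_nonneg (Real.rpow_nonneg (hw _) _), hw_pow hr] using hw_int
  have hmem_wf : MemLp (fun x => w x ^ p⁻¹ * f x) (ENNReal.ofReal p) μ := by
    have hm : AEStronglyMeasurable (fun x => w x ^ p⁻¹ * f x) μ :=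
      (hmeas (inv_pos.2 hp0)).mul hf_meas
    rw [← integrable_norm_rpow_iff hm (by simpa using hp0)
      ENNReal.ofReal_ne_top, ENNReal.toReal_ofReal hp0.le]
    simpa [Real.norm_of_nonneg (mul_nonneg (Real.rpow_nonneg (hw _) _) (hf _)), hwf_pow]
      using hwf_int
  have key := integral_mul_le_Lp_mul_Lq_of_nonneg hpq
    (Filter.Eventually.of_forall fun x => Real.rpow_nonneg (hw x) _)
    (Filter.Eventually.of_forall fun x => mul_nonneg (Real.rpow_nonneg (hw x) _) (hf x))
    hmem_w hmem_wf
  rw [hw_pow hr, hwf_pow, one_div, one_div] at key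
  rw [hpq.symm.one_sub_inv]
  refine le_of_eq_of_le (integral_congr_ae (Filter.Eventually.of_forall fun x => ?_)) key
  show w x * f x = w x ^ r⁻¹ * (w x ^ p⁻¹ * f x)
  rw [← mul_assoc, ← Real.rpow_add' (hw x) (by rw [hpq.inv_add_inv_eq_one]; norm_num),
    hpq.inv_add_inv_eq_one, Real.rpow_one]

theorem integral_abs_two_mul_sub_one_mul_rpow {s : ℝ} (hs : -1 < s) :
    ∫ t in (0:ℝ)..1, |2 * t - 1| * t ^ s
      = 1 / (s + 1) + ((1 / 2 : ℝ) ^ s - 2) / ((s + 1) * (s + 2)) := by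
  have hs1 : s + 1 ≠ 0 := by linarith
  have hs2 : s + 2 ≠ 0 := by linarith
  have hint₁ : ∀ u v : ℝ, IntervalIntegrable (fun t : ℝ => t ^ s) volume u v :=
    fun _ _ => intervalIntegral.intervalIntegrable_rpow' hs
  have hint₂ : ∀ u v : ℝ, IntervalIntegrable (fun t : ℝ => 2 * t ^ (s + 1)) volume u v :=
    fun _ _ => (intervalIntegral.intervalIntegrable_rpow' (by linarith)).const_mul 2
  set h : ℝ → ℝ := fun t => t ^ s - 2 * t ^ (s + 1)
  set F : ℝ → ℝ := fun t => t ^ (s + 1) / (s + 1) - 2 * (t ^ (s + 2) / (s + 2))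
  have hh_eq : ∀ t, 0 ≤ t → (1 - 2 * t) * t ^ s = h t := fun t ht => by
    simp only [h]; rw [Real.rpow_add_one' ht hs1]; ring
  have hh_integral : ∀ u v : ℝ, ∫ t in u..v, h t = F v - F u := fun u v => by
    rw [intervalIntegral.integral_sub (hint₁ u v) (hint₂ u v), intervalIntegral.integral_const_mul,
      integral_rpow (Or.inl hs), integral_rpow (Or.inl (by linarith))]
    simp only [F]; ring_nf
  have hleft : ∫ t in (0:ℝ)..(1/2), |2 * t - 1| * t ^ s = F (1/2) - F 0 := by
    rw [← hh_integral]
    refine intervalIntegral.integral_congr fun t ht => ?_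
    rw [uIcc_of_le (by norm_num)] at ht
    rw [abs_of_nonpos (by linarith [ht.2]), neg_sub, hh_eq t ht.1]
  have hright : ∫ t in (1/2:ℝ)..1, |2 * t - 1| * t ^ s = F (1/2) - F 1 := by
    rw [← neg_sub, ← hh_integral, ← intervalIntegral.integral_neg]
    refine intervalIntegral.integral_congr fun t ht => ?_
    rw [uIcc_of_le (by norm_num)] at ht
    rw [abs_of_nonneg (by linarith [ht.1]), ← hh_eq t (by linarith [ht.1])]
    ring
  have hc : Continuous fun t : ℝ => |2 * t - 1| := by fun_prop
  have hint : ∀ u v : ℝ, IntervalIntegrable (fun t => |2 * t - 1| * t ^ s) volume u v :=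
    fun u v => (hint₁ u v).continuousOn_mul hc.continuousOn
  rw [← intervalIntegral.integral_add_adjacent_intervals (hint 0 (1/2)) (hint (1/2) 1),
    hleft, hright]
  have hhalf₁ : (1/2 : ℝ) ^ (s + 1) = (1/2) ^ s / 2 := by
    rw [Real.rpow_add_one (by norm_num)]; ring
  have hhalf₂ : (1/2 : ℝ) ^ (s + 2) = (1/2) ^ s / 4 := by
    rw [show s + 2 = s + 1 + 1 by ring, Real.rpow_add_one (by norm_num), hhalf₁]; ring
  simp only [F, hhalf₁, hhalf₂, Real.one_rpow, Real.zero_rpow hs1, Real.zero_rpow hs2]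
  field_simp
  ring

theorem integral_abs_two_mul_sub_one_mul_comp_one_sub (g : ℝ → ℝ) :
    ∫ t in (0:ℝ)..1, |2 * t - 1| * g (1 - t) = ∫ t in (0:ℝ)..1, |2 * t - 1| * g t := by
  have h := intervalIntegral.integral_comp_sub_left (fun t => |2 * t - 1| * g t) (1 : ℝ)
    (a := 0) (b := 1)
  norm_num at h
  rw [← h]
  refine intervalIntegral.integral_congr fun t _ => ?_
  rw [show 2 * (1 - t) - 1 = -(2 * t - 1) by ring, abs_neg]

theorem integral_abs_two_mul_sub_one : ∫ t in (0:ℝ)..1, |2 * t - 1| = 1 / 2 := by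
  have h := integral_abs_two_mul_sub_one_mul_rpow (s := 0) (by norm_num)
  simp only [Real.rpow_zero, mul_one] at h
  rw [h]; norm_num

theorem aestronglyMeasurable_comp_of_hasDerivAt {α : Type*} [MeasurableSpace α] {μ : Measure α}
    {f f' : ℝ → ℝ} {u : α → ℝ} {S : Set α} (hu : Measurable u) (hS : MeasurableSet S)
    (hf : ∀ x ∈ S, HasDerivAt f (f' (u x)) (u x)) :
    AEStronglyMeasurable (fun x => f' (u x)) (μ.restrict S) :=
  ((measurable_deriv f).comp hu).aestronglyMeasurable.congr <|
    (ae_restrict_mem hS).mono fun x hx => (hf x hx).deriv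

theorem endpoint_mean_sub_average_eq_integral {f f' : ℝ → ℝ} {a b : ℝ} (hab : a ≠ b)
    (hf : ∀ x ∈ uIcc a b, HasDerivAt f (f' x) x)
    (hf' : IntervalIntegrable (fun t => f' ((b - a) * t + a)) volume 0 1) :
    (f a + f b) / 2 - (1 / (b - a)) * ∫ x in a..b, f x
      = (b - a) / 2 * ∫ t in (0:ℝ)..1, (2 * t - 1) * f' ((b - a) * t + a) := by
  have hba : b - a ≠ 0 := sub_ne_zero.2 hab.symm
  have hmaps : ∀ t ∈ uIcc (0:ℝ) 1, (b - a) * t + a ∈ uIcc a b := fun t ht => by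
    rw [uIcc_of_le zero_le_one] at ht
    rcases le_total a b with h | h
    · rw [uIcc_of_le h]; constructor <;> nlinarith [ht.1, ht.2]
    · rw [uIcc_of_ge h]; constructor <;> nlinarith [ht.1, ht.2]
  have hpull : ∀ t ∈ uIcc (0:ℝ) 1,
      HasDerivAt (fun t => f ((b - a) * t + a)) ((b - a) * f' ((b - a) * t + a)) t := by
    intro t ht
    have := (hf _ (hmaps t ht)).comp t (((hasDerivAt_id t).const_mul (b - a)).add_const a)
    rwa [mul_one, mul_comm] at this
  have hparts := intervalIntegral.integral_mul_deriv_eq_deriv_mul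
    (fun t _ => ((hasDerivAt_id t).const_mul 2).sub_const 1) hpull intervalIntegrable_const
    (hf'.const_mul (b - a))
  have hsubst : ∫ t in (0:ℝ)..1, f ((b - a) * t + a) = (b - a)⁻¹ * ∫ x in a..b, f x := by
    simpa using intervalIntegral.integral_comp_mul_add (a := 0) (b := 1) f hba a
  simp only [mul_one, mul_zero, zero_add, sub_add_cancel, id, intervalIntegral.integral_const_mul,
    hsubst] at hparts
  simp_rw [mul_left_comm _ (b - a), intervalIntegral.integral_const_mul] at hparts
  linear_combination (-1 / 2 : ℝ) * hparts

theorem abs_integral_two_mul_sub_one_mul_le_weight_mul_Lp {g : ℝ → ℝ} {q : ℝ} (hq : 1 < q)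
    (hg : AEStronglyMeasurable g (volume.restrict (Ioc 0 1)))
    (hgq : IntervalIntegrable (fun t => |2 * t - 1| * |g t| ^ q) volume 0 1) :
    |∫ t in (0:ℝ)..1, (2 * t - 1) * g t|
      ≤ (1 / 2 : ℝ) ^ (1 - q⁻¹) * (∫ t in (0:ℝ)..1, |2 * t - 1| * |g t| ^ q) ^ q⁻¹ := by
  have hw : IntegrableOn (fun t : ℝ => |2 * t - 1|) (Ioc 0 1) :=
    (intervalIntegrable_iff_integrableOn_Ioc_of_le zero_le_one).1
      (Continuous.intervalIntegrable (by fun_prop) 0 1)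
  have hholder := integral_mul_le_weight_mul_Lp_of_nonneg hq (fun t => abs_nonneg (2 * t - 1))
    (fun t => abs_nonneg (g t)) hw hg.norm
    ((intervalIntegrable_iff_integrableOn_Ioc_of_le zero_le_one).1 hgq)
  simp only [← intervalIntegral.integral_of_le zero_le_one, integral_abs_two_mul_sub_one] at hholder
  calc |∫ t in (0:ℝ)..1, (2 * t - 1) * g t|
      ≤ ∫ t in (0:ℝ)..1, |(2 * t - 1) * g t| :=
        intervalIntegral.abs_integral_le_integral_abs zero_le_one
    _ = ∫ t in (0:ℝ)..1, |2 * t - 1| * |g t| := by simp_rw [abs_mul]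
    _ ≤ _ := hholder

theorem intervalIntegrable_one_sub_rpow {s : ℝ} (hs : -1 < s) :
    IntervalIntegrable (fun t : ℝ => (1 - t) ^ s) volume 0 1 := by
  simpa using
    ((intervalIntegral.intervalIntegrable_rpow' (a := 0) (b := 1) hs).comp_sub_left 1).symm

theorem intervalIntegrable_rpow_mul_add_one_sub_rpow_mul {s : ℝ} (hs : -1 < s) (A B : ℝ) :
    IntervalIntegrable (fun t : ℝ => t ^ s * A + (1 - t) ^ s * B) volume 0 1 :=
  ((intervalIntegral.intervalIntegrable_rpow' hs).mul_const A).add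
    ((intervalIntegrable_one_sub_rpow hs).mul_const B)

theorem integral_abs_two_mul_sub_one_mul_le_of_le {φ : ℝ → ℝ} {s A B : ℝ} (hs : -1 < s)
    (hφ : IntervalIntegrable φ volume 0 1)
    (hle : ∀ t ∈ Icc (0:ℝ) 1, φ t ≤ t ^ s * A + (1 - t) ^ s * B) :
    ∫ t in (0:ℝ)..1, |2 * t - 1| * φ t
      ≤ (1 / (s + 1) + ((1 / 2 : ℝ) ^ s - 2) / ((s + 1) * (s + 2))) * (A + B) := by
  have hc : ContinuousOn (fun t : ℝ => |2 * t - 1|) (uIcc 0 1) := by fun_prop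
  have hint : ∀ e : ℝ → ℝ, IntervalIntegrable e volume 0 1 →
      IntervalIntegrable (fun t => |2 * t - 1| * e t) volume 0 1 :=
    fun _ he => he.continuousOn_mul hc
  have hrpow := intervalIntegral.intervalIntegrable_rpow' (a := 0) (b := 1) hs
  have hrpow' := intervalIntegrable_one_sub_rpow hs
  calc ∫ t in (0:ℝ)..1, |2 * t - 1| * φ t
      ≤ ∫ t in (0:ℝ)..1, |2 * t - 1| * (t ^ s * A + (1 - t) ^ s * B) :=
        intervalIntegral.integral_mono_on zero_le_one (hint _ hφ)
          (hint _ (intervalIntegrable_rpow_mul_add_one_sub_rpow_mul hs A B))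
          fun t ht => mul_le_mul_of_nonneg_left (hle t ht) (abs_nonneg _)
    _ = A * (∫ t in (0:ℝ)..1, |2 * t - 1| * t ^ s)
          + B * ∫ t in (0:ℝ)..1, |2 * t - 1| * (1 - t) ^ s := by
        rw [← intervalIntegral.integral_const_mul, ← intervalIntegral.integral_const_mul,
          ← intervalIntegral.integral_add ((hint _ hrpow).const_mul A)
            ((hint _ hrpow').const_mul B)]
        congr 1 with t
        ring
    _ = _ := by
        rw [integral_abs_two_mul_sub_one_mul_comp_one_sub (fun t => t ^ s),
          integral_abs_two_mul_sub_one_mul_rpow hs]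
        ring

theorem intervalIntegrable_abs_rpow_of_le {g : ℝ → ℝ} {q s A B : ℝ} (hq : 0 ≤ q) (hs : -1 < s)
    (hg : AEStronglyMeasurable g (volume.restrict (Ioc 0 1)))
    (hle : ∀ t ∈ Icc (0:ℝ) 1, |g t| ^ q ≤ t ^ s * A + (1 - t) ^ s * B) :
    IntervalIntegrable (fun t => |g t| ^ q) volume 0 1 := by
  refine (intervalIntegrable_rpow_mul_add_one_sub_rpow_mul hs A B).mono_fun' ?_ ?_ <;>
    rw [uIoc_of_le zero_le_one]
  · exact (Real.continuous_rpow_const hq).comp_aestronglyMeasurable hg.norm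
  · refine (ae_restrict_mem measurableSet_Ioc).mono fun t ht => ?_
    dsimp only
    rw [Real.norm_of_nonneg (by positivity)]
    exact hle t (Ioc_subset_Icc_self ht)

theorem IntervalIntegrable.of_abs_rpow {g : ℝ → ℝ} {q a b : ℝ} (hq : 1 ≤ q) (hab : a ≤ b)
    (hg : AEStronglyMeasurable g (volume.restrict (Ioc a b)))
    (hgq : IntervalIntegrable (fun t => |g t| ^ q) volume a b) :
    IntervalIntegrable g volume a b := by
  rw [intervalIntegrable_iff_integrableOn_Ioc_of_le hab] at hgq ⊢
  have := integrable_norm_rpow_of_le hg zero_le_one (by linarith) hq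
    (by simp_rw [Real.norm_eq_abs]; exact hgq)
  exact (integrable_norm_iff hg).1 (by simpa only [Real.rpow_one] using this)

theorem abs_integral_two_mul_sub_one_mul_le {g : ℝ → ℝ} {q s A B : ℝ} (hq : 1 < q) (hs : -1 < s)
    (hg : AEStronglyMeasurable g (volume.restrict (Ioc 0 1)))
    (hle : ∀ t ∈ Icc (0:ℝ) 1, |g t| ^ q ≤ t ^ s * A + (1 - t) ^ s * B) :
    |∫ t in (0:ℝ)..1, (2 * t - 1) * g t|
      ≤ (1 / 2 : ℝ) ^ (1 - q⁻¹)
        * ((1 / (s + 1) + ((1 / 2 : ℝ) ^ s - 2) / ((s + 1) * (s + 2))) * (A + B)) ^ q⁻¹ := by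
  have hgq := intervalIntegrable_abs_rpow_of_le (by linarith) hs hg hle
  refine (abs_integral_two_mul_sub_one_mul_le_weight_mul_Lp hq hg
    (hgq.continuousOn_mul (by fun_prop))).trans ?_
  gcongr
  · exact intervalIntegral.integral_nonneg zero_le_one fun t _ => by positivity
  · exact integral_abs_two_mul_sub_one_mul_le_of_le hs hgq hle

theorem sconvex_trapezoid_bound_q_gt_one_general
    (s a b c d q : ℝ) (hs : s ∈ Set.Ioo (0:ℝ) 1) (hab : a < b)
    (hq : 1 < q) (hsub : Set.Icc a b ⊆ Set.Ioo c d)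
    (f f' : ℝ → ℝ)
    (hdiff : ∀ x ∈ Set.Ioo c d, HasDerivAt f (f' x) x)
    (hsconv : ∀ u ∈ Set.Icc a b, ∀ v ∈ Set.Icc a b, ∀ t ∈ Set.Icc (0:ℝ) 1,
      |f' (t * u + (1 - t) * v)| ^ q ≤ t ^ s * |f' u| ^ q + (1 - t) ^ s * |f' v| ^ q) :
    |(f a + f b) / 2 - (1 / (b - a)) * ∫ x in a..b, f x|
      ≤ ((b - a) / 2) * (1 / 2 : ℝ) ^ ((q - 1) / q)
        * (1 / (s + 1) + ((1 / 2 : ℝ) ^ s - 2) / ((s + 1) * (s + 2))) ^ (1 / q)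
        * (|f' a| ^ q + |f' b| ^ q) ^ (1 / q) := by
  have hs : -1 < s := by linarith [hs.1]
  set g : ℝ → ℝ := fun t => f' ((b - a) * t + a)
  have hmaps : ∀ t ∈ Icc (0:ℝ) 1, (b - a) * t + a ∈ Icc a b := fun t ht =>
    ⟨by nlinarith [ht.1], by nlinarith [ht.2]⟩
  have hle : ∀ t ∈ Icc (0:ℝ) 1, |g t| ^ q ≤ t ^ s * |f' b| ^ q + (1 - t) ^ s * |f' a| ^ q :=
    fun t ht => by
      simpa only [g, show t * b + (1 - t) * a = (b - a) * t + a by ring]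
        using hsconv b (right_mem_Icc.2 hab.le) a (left_mem_Icc.2 hab.le) t ht
  have hg_meas : AEStronglyMeasurable g (volume.restrict (Ioc 0 1)) :=
    aestronglyMeasurable_comp_of_hasDerivAt (by fun_prop) measurableSet_Ioc
      fun t ht => hdiff _ (hsub (hmaps t (Ioc_subset_Icc_self ht)))
  have hg : IntervalIntegrable g volume 0 1 := .of_abs_rpow hq.le zero_le_one hg_meas
    (intervalIntegrable_abs_rpow_of_le (by linarith) hs hg_meas hle)
  have hf : ∀ x ∈ uIcc a b, HasDerivAt f (f' x) x := fun x hx =>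
    hdiff x (hsub (by rwa [uIcc_of_le hab.le] at hx))
  have hK : 0 ≤ 1 / (s + 1) + ((1 / 2 : ℝ) ^ s - 2) / ((s + 1) * (s + 2)) := by
    rw [← integral_abs_two_mul_sub_one_mul_rpow hs]
    exact intervalIntegral.integral_nonneg zero_le_one fun t ht =>
      mul_nonneg (abs_nonneg _) (Real.rpow_nonneg ht.1 _)
  rw [endpoint_mean_sub_average_eq_integral hab.ne hf hg, abs_mul, abs_of_pos (by linarith),
    mul_assoc, mul_assoc, ← Real.mul_rpow hK (by positivity), add_comm (|f' a| ^ q), one_div q,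
    show (q - 1) / q = 1 - q⁻¹ by field_simp [(by linarith : q ≠ 0)]]
  gcongr
  exact abs_integral_two_mul_sub_one_mul_le hq hs hg_meas hle

theorem sconvex_trapezoid_bound_q_gt_one
    (s a b c d q : ℝ) (hs : s ∈ Set.Ioo (0:ℝ) 1) (ha : 0 ≤ a) (hab : a < b)
    (hq : 1 < q) (hsub : Set.Icc a b ⊆ Set.Ioo c d)
    (f f' : ℝ → ℝ)
    (hdiff : ∀ x ∈ Set.Ioo c d, HasDerivAt f (f' x) x)
    (hsconv : ∀ u ∈ Set.Icc a b, ∀ v ∈ Set.Icc a b, ∀ t ∈ Set.Icc (0:ℝ) 1,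
      |f' (t * u + (1 - t) * v)| ^ q ≤ t ^ s * |f' u| ^ q + (1 - t) ^ s * |f' v| ^ q) :
    |(f a + f b) / 2 - (1 / (b - a)) * ∫ x in a..b, f x|
      ≤ ((b - a) / 2) * (1 / 2 : ℝ) ^ ((q - 1) / q)
        * (1 / (s + 1) + ((1 / 2 : ℝ) ^ s - 2) / ((s + 1) * (s + 2))) ^ (1 / q)
        * (|f' a| ^ q + |f' b| ^ q) ^ (1 / q) :=
  sconvex_trapezoid_bound_q_gt_one_general s a b c d q hs hab hq hsub f f' hdiff hsconv
end

section
/- Let f : ℝ → ℝ be differentiable on an open interval containing [a,b] ⊆ [0,∞) with a < b, let q > 1 and s ∈ (0,1), and suppose |f'|^q is s-convex in the second sense on [a,b]. Then |(f(a)+f(b))/2 - (1/(b-a)) ∫_a^b f(x) dx| ≤ ((b-a)/2) · ((q-1)/(2(2q-1)))^((q-1)/q) · (1/(2(s+1)))^(1/q) · [ (|f'(a)|^q + |f'((a+b)/2)|^q)^(1/q) + (|f'((a+b)/2)|^q + |f'(b)|^q)^(1/q) ]. -/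
/-!
Integrating by parts, the trapezoid error equals `(b - a)⁻¹ ∫ₐᵇ (x - m) f'(x) dx` with `m`
the midpoint. On each half `[a, m]`, `[m, b]` Hölder's inequality with `p = q / (q - 1)`
separates the weight `|x - m|`, whose `Lᵖ` norm is explicit, from `|f'|`, whose `L^q` norm
is controlled by integrating the `s`-convexity bound
`|f'(x)|^q ≤ ((m - x)^s |f'(a)|^q + (x - a)^s |f'(m)|^q) / h^s` (`h = m - a`),
which gives `h / (s + 1) · (|f'(a)|^q + |f'(m)|^q)`.
-/

open MeasureTheory Set Real

theorem trapezoid_sub_average_eq_integral {f f' : ℝ → ℝ} {a b : ℝ} (hab : a ≠ b)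
    (hf : ∀ x ∈ uIcc a b, HasDerivAt f (f' x) x) (hf' : IntervalIntegrable f' volume a b) :
    (f a + f b) / 2 - 1 / (b - a) * ∫ x in a..b, f x
      = 1 / (b - a) * ∫ x in a..b, (x - (a + b) / 2) * f' x := by
  have hparts := intervalIntegral.integral_mul_deriv_eq_deriv_mul
    (fun x _ => (hasDerivAt_id x).sub_const ((a + b) / 2)) hf intervalIntegrable_const hf'
  simp only [one_mul, id] at hparts
  rw [hparts]
  have : b - a ≠ 0 := sub_ne_zero.2 hab.symm
  field_simp
  ring

theorem abs_integral_sub_mul_le {φ : ℝ → ℝ} {a b m : ℝ} (ham : a ≤ m) (hmb : m ≤ b)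
    (hφ : IntervalIntegrable φ volume a b) :
    |∫ x in a..b, (x - m) * φ x|
      ≤ (∫ x in a..m, (m - x) * |φ x|) + ∫ x in m..b, (x - m) * |φ x| := by
  have hint : ∀ {u v}, u ∈ uIcc a b → v ∈ uIcc a b →
      IntervalIntegrable (fun x => (x - m) * φ x) volume u v := fun hu hv =>
    ((hφ.mono_set (uIcc_subset_uIcc hu hv)).continuousOn_mul (by fun_prop))
  have hm : m ∈ uIcc a b := by rw [uIcc_of_le (ham.trans hmb)]; exact ⟨ham, hmb⟩
  rw [← intervalIntegral.integral_add_adjacent_intervals (hint left_mem_uIcc hm)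
    (hint hm right_mem_uIcc)]
  refine (abs_add_le _ _).trans (add_le_add ?_ ?_)
  · calc |∫ x in a..m, (x - m) * φ x| ≤ ∫ x in a..m, |(x - m) * φ x| :=
          intervalIntegral.abs_integral_le_integral_abs ham
      _ = ∫ x in a..m, (m - x) * |φ x| := intervalIntegral.integral_congr fun x hx => by
          rw [uIcc_of_le ham] at hx
          rw [abs_mul, abs_of_nonpos (sub_nonpos.2 hx.2), neg_sub]
  · calc |∫ x in m..b, (x - m) * φ x| ≤ ∫ x in m..b, |(x - m) * φ x| :=
          intervalIntegral.abs_integral_le_integral_abs hmb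
      _ = ∫ x in m..b, (x - m) * |φ x| := intervalIntegral.integral_congr fun x hx => by
          rw [uIcc_of_le hmb] at hx
          rw [abs_mul, abs_of_nonneg (sub_nonneg.2 hx.1)]

theorem integral_sub_left_rpow {u v r : ℝ} (hr : -1 < r) :
    ∫ x in u..v, (v - x) ^ r = (v - u) ^ (r + 1) / (r + 1) := by
  rw [intervalIntegral.integral_comp_sub_left (· ^ r), sub_self, integral_rpow (.inl hr),
    zero_rpow (by linarith), sub_zero]

theorem integral_sub_right_rpow {u v r : ℝ} (hr : -1 < r) :
    ∫ x in u..v, (x - u) ^ r = (v - u) ^ (r + 1) / (r + 1) := by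
  rw [intervalIntegral.integral_comp_sub_right (· ^ r), sub_self, integral_rpow (.inl hr),
    zero_rpow (by linarith), sub_zero]

theorem intervalIntegral.integral_mul_le_Lp_mul_Lq_of_nonneg {p q a b : ℝ}
    (hpq : p.HolderConjugate q) {f g : ℝ → ℝ} (hab : a ≤ b)
    (hf0 : ∀ x ∈ Ioc a b, 0 ≤ f x) (hg0 : ∀ x ∈ Ioc a b, 0 ≤ g x)
    (hf : MemLp f (ENNReal.ofReal p) (volume.restrict (Ioc a b)))
    (hg : MemLp g (ENNReal.ofReal q) (volume.restrict (Ioc a b))) :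
    ∫ x in a..b, f x * g x
      ≤ (∫ x in a..b, f x ^ p) ^ (1 / p) * (∫ x in a..b, g x ^ q) ^ (1 / q) := by
  simp only [intervalIntegral.integral_of_le hab]
  exact MeasureTheory.integral_mul_le_Lp_mul_Lq_of_nonneg hpq
    (ae_restrict_of_forall_mem measurableSet_Ioc hf0)
    (ae_restrict_of_forall_mem measurableSet_Ioc hg0) hf hg

theorem ContinuousOn.memLp_restrict_Ioc {w : ℝ → ℝ} {u v : ℝ}
    (hw : ContinuousOn w (Icc u v)) (r : ENNReal) : MemLp w r (volume.restrict (Ioc u v)) := by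
  obtain ⟨C, hC⟩ := isCompact_Icc.exists_bound_of_continuousOn hw
  exact .of_bound ((hw.mono Ioc_subset_Icc_self).aestronglyMeasurable measurableSet_Ioc) C
    (ae_restrict_of_forall_mem measurableSet_Ioc fun x hx => hC x (Ioc_subset_Icc_self hx))

/-- `s`-convexity in the second sense (Breckner). -/
def SConvexOn (s : ℝ) (S : Set ℝ) (g : ℝ → ℝ) : Prop :=
  ∀ u ∈ S, ∀ v ∈ S, ∀ t ∈ Icc (0:ℝ) 1,
    g (t * u + (1 - t) * v) ≤ t ^ s * g u + (1 - t) ^ s * g v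

namespace SConvexOn

variable {s u v x : ℝ} {S : Set ℝ} {g : ℝ → ℝ}

theorem subset {T : Set ℝ} (hg : SConvexOn s S g) (hT : T ⊆ S) : SConvexOn s T g :=
  fun u hu v hv => hg u (hT hu) v (hT hv)

theorem le_of_mem_Icc (hg : SConvexOn s S g) (hu : u ∈ S) (hv : v ∈ S) (huv : u < v)
    (hx : x ∈ Icc u v) :
    g x ≤ ((v - x) ^ s * g u + (x - u) ^ s * g v) / (v - u) ^ s := by
  have hvu : 0 < v - u := sub_pos.2 huv
  have ht : (v - x) / (v - u) ∈ Icc (0:ℝ) 1 :=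
    ⟨div_nonneg (by linarith [hx.2]) hvu.le, (div_le_one hvu).2 (by linarith [hx.1])⟩
  have hcomb : (v - x) / (v - u) * u + (1 - (v - x) / (v - u)) * v = x := by
    field_simp; ring
  have hcompl : 1 - (v - x) / (v - u) = (x - u) / (v - u) := by field_simp; ring
  have key := hg u hu v hv _ ht
  rw [hcomb, hcompl, div_rpow (by linarith [hx.2]) hvu.le,
    div_rpow (by linarith [hx.1]) hvu.le] at key
  calc g x ≤ _ := key
    _ = _ := by ring

theorem le_add (hg : SConvexOn s S g) (hs : 0 ≤ s) (hu : u ∈ S) (hv : v ∈ S) (huv : u < v)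
    (hgu : 0 ≤ g u) (hgv : 0 ≤ g v) (hx : x ∈ Icc u v) : g x ≤ g u + g v := by
  have hvu : 0 < (v - u) ^ s := rpow_pos_of_pos (sub_pos.2 huv) s
  calc g x ≤ ((v - x) ^ s * g u + (x - u) ^ s * g v) / (v - u) ^ s :=
        hg.le_of_mem_Icc hu hv huv hx
    _ ≤ ((v - u) ^ s * g u + (v - u) ^ s * g v) / (v - u) ^ s := by
        have hux : u ≤ x := hx.1
        have hxv : x ≤ v := hx.2
        gcongr
    _ = g u + g v := by field_simp

theorem integral_le (hg : SConvexOn s (Icc u v) g) (hs : -1 < s) (huv : u < v)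
    (hint : IntervalIntegrable g volume u v) :
    ∫ x in u..v, g x ≤ (v - u) / (s + 1) * (g u + g v) := by
  have hu : u ∈ Icc u v := left_mem_Icc.2 huv.le
  have hv : v ∈ Icc u v := right_mem_Icc.2 huv.le
  have hleft : IntervalIntegrable (fun x => (v - x) ^ s) volume u v := by
    simpa using
      ((intervalIntegral.intervalIntegrable_rpow' hs).comp_sub_left v (a := 0) (b := v - u)).symm
  have hright : IntervalIntegrable (fun x => (x - u) ^ s) volume u v := by
    simpa using
      (intervalIntegral.intervalIntegrable_rpow' hs).comp_sub_right u (a := 0) (b := v - u)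
  calc ∫ x in u..v, g x
      ≤ ∫ x in u..v, ((v - x) ^ s * g u + (x - u) ^ s * g v) / (v - u) ^ s :=
        intervalIntegral.integral_mono_on huv.le hint
          (((hleft.mul_const _).add (hright.mul_const _)).div_const _)
          fun x hx => hg.le_of_mem_Icc hu hv huv hx
    _ = (v - u) / (s + 1) * (g u + g v) := by
        have hvu : 0 < v - u := sub_pos.2 huv
        rw [intervalIntegral.integral_div,
          intervalIntegral.integral_add (hleft.mul_const _) (hright.mul_const _),
          intervalIntegral.integral_mul_const, intervalIntegral.integral_mul_const,
          integral_sub_left_rpow hs, integral_sub_right_rpow hs, rpow_add hvu, rpow_one]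
        have : (v - u) ^ s ≠ 0 := (rpow_pos_of_pos hvu s).ne'
        field_simp

theorem memLp_of_abs_rpow {q : ℝ} (hs : 0 ≤ s) (hq : 0 < q)
    (huv : u < v) (hg : SConvexOn s (Icc u v) fun x => |g x| ^ q)
    (hgm : AEStronglyMeasurable g (volume.restrict (Ioc u v))) (r : ENNReal) :
    MemLp g r (volume.restrict (Ioc u v)) := by
  refine .of_bound hgm ((|g u| ^ q + |g v| ^ q) ^ q⁻¹)
    (ae_restrict_of_forall_mem measurableSet_Ioc fun x hx => ?_)
  rw [norm_eq_abs, le_rpow_inv_iff_of_pos (abs_nonneg _) (by positivity) hq]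
  exact hg.le_add hs (left_mem_Icc.2 huv.le) (right_mem_Icc.2 huv.le) huv (by positivity)
    (by positivity) (Ioc_subset_Icc_self hx)

theorem integral_mul_abs_le {p q : ℝ} {w : ℝ → ℝ} (hpq : p.HolderConjugate q)
    (hs : 0 ≤ s) (huv : u < v) (hg : SConvexOn s (Icc u v) fun x => |g x| ^ q)
    (hgm : AEStronglyMeasurable g (volume.restrict (Ioc u v)))
    (hw : ContinuousOn w (Icc u v)) (hw0 : ∀ x ∈ Icc u v, 0 ≤ w x) :
    ∫ x in u..v, w x * |g x|
      ≤ (∫ x in u..v, w x ^ p) ^ (1 / p)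
        * ((v - u) / (s + 1) * (|g u| ^ q + |g v| ^ q)) ^ (1 / q) := by
  have hgq : MemLp (fun x => |g x|) (ENNReal.ofReal q) (volume.restrict (Ioc u v)) :=
    (hg.memLp_of_abs_rpow hs hpq.symm.pos huv hgm _).abs
  have hint : IntervalIntegrable (fun x => |g x| ^ q) volume u v := by
    rw [intervalIntegrable_iff_integrableOn_Ioc_of_le huv.le, IntegrableOn]
    simpa [ENNReal.toReal_ofReal hpq.symm.nonneg] using
      hgq.integrable_norm_rpow (by simp [hpq.symm.pos]) ENNReal.ofReal_ne_top
  calc ∫ x in u..v, w x * |g x|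
      ≤ (∫ x in u..v, w x ^ p) ^ (1 / p) * (∫ x in u..v, |g x| ^ q) ^ (1 / q) :=
        intervalIntegral.integral_mul_le_Lp_mul_Lq_of_nonneg hpq huv.le
          (fun x hx => hw0 x (Ioc_subset_Icc_self hx)) (fun x _ => abs_nonneg _)
          (hw.memLp_restrict_Ioc _) hgq
    _ ≤ _ := by
        have hwp : 0 ≤ ∫ x in u..v, w x ^ p :=
          intervalIntegral.integral_nonneg huv.le fun x hx => rpow_nonneg (hw0 x hx) p
        have hgq_nonneg : 0 ≤ ∫ x in u..v, |g x| ^ q :=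
          intervalIntegral.integral_nonneg huv.le fun x _ => by positivity
        gcongr
        · exact hpq.symm.one_div_nonneg
        · exact hg.integral_le (by linarith) huv hint

end SConvexOn

/-- Where the constants of the theorem come from: `h = (b - a) / 2`, `p = q / (q - 1)`,
`∫₀ʰ tᵖ dt = h ^ (p + 1) / (p + 1)`. -/
theorem holder_half_bound_eq {q s h A : ℝ} (hq : 1 < q) (hs : -1 < s) (hh : 0 < h)
    (hA : 0 ≤ A) :
    (h ^ (q / (q - 1) + 1) / (q / (q - 1) + 1)) ^ (1 / (q / (q - 1)))
        * (h / (s + 1) * A) ^ (1 / q)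
      = 2 * h ^ 2 * ((q - 1) / (2 * (2 * q - 1))) ^ ((q - 1) / q)
          * (1 / (2 * (s + 1))) ^ (1 / q) * A ^ (1 / q) := by
  have hq1 : 0 < q - 1 := by linarith
  have hq2 : 0 < 2 * q - 1 := by linarith
  have hs1 : 0 < s + 1 := by linarith
  have hexp : q / (q - 1) + 1 = (2 * q - 1) / (q - 1) := by field_simp; ring
  have hpow : (h ^ ((2 * q - 1) / (q - 1))) ^ ((q - 1) / q) * h ^ (1 / q) = h ^ 2 := by
    rw [← rpow_mul hh.le, ← rpow_add hh, ← rpow_natCast]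
    congr 1
    field_simp
    ring
  have hhalf : ((1:ℝ) / 2) ^ ((q - 1) / q) * (1 / 2) ^ (1 / q) = 1 / 2 := by
    rw [← rpow_add (by norm_num), show (q - 1) / q + 1 / q = 1 by field_simp; ring, rpow_one]
  rw [hexp, one_div_div, div_eq_mul_one_div _ ((2 * q - 1) / (q - 1)), one_div_div,
    mul_rpow (by positivity) (by positivity),
    show (q - 1) / (2 * (2 * q - 1)) = 1 / 2 * ((q - 1) / (2 * q - 1)) by field_simp,
    show 1 / (2 * (s + 1)) = 1 / 2 * (1 / (s + 1)) by field_simp,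
    show h / (s + 1) * A = h * (1 / (s + 1)) * A by ring,
    mul_rpow (by positivity) (by positivity), mul_rpow (by positivity) (by positivity),
    mul_rpow (by positivity) (by positivity), mul_rpow (by positivity) (by positivity)]
  set K := ((q - 1) / (2 * q - 1)) ^ ((q - 1) / q) * (1 / (s + 1)) ^ (1 / q) * A ^ (1 / q)
  linear_combination K * hpow - 2 * h ^ 2 * K * hhalf

theorem sconvex_trapezoid_bound_midpoint_general
    (s a b c d q : ℝ) (hs : s ∈ Set.Ioo (0:ℝ) 1) (hab : a < b)
    (hq : 1 < q) (hsub : Set.Icc a b ⊆ Set.Ioo c d)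
    (f f' : ℝ → ℝ)
    (hdiff : ∀ x ∈ Set.Ioo c d, HasDerivAt f (f' x) x)
    (hsconv : ∀ u ∈ Set.Icc a b, ∀ v ∈ Set.Icc a b, ∀ t ∈ Set.Icc (0:ℝ) 1,
      |f' (t * u + (1 - t) * v)| ^ q ≤ t ^ s * |f' u| ^ q + (1 - t) ^ s * |f' v| ^ q) :
    |(f a + f b) / 2 - (1 / (b - a)) * ∫ x in a..b, f x|
      ≤ ((b - a) / 2) * ((q - 1) / (2 * (2 * q - 1))) ^ ((q - 1) / q)
        * (1 / (2 * (s + 1))) ^ (1 / q)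
        * ((|f' a| ^ q + |f' ((a + b) / 2)| ^ q) ^ (1 / q)
            + (|f' ((a + b) / 2)| ^ q + |f' b| ^ q) ^ (1 / q)) := by
  obtain ⟨hs₀, -⟩ := hs
  have hg : SConvexOn s (Icc a b) fun x => |f' x| ^ q := hsconv
  have hpq : (q / (q - 1)).HolderConjugate q := (HolderConjugate.conjExponent hq).symm
  have ham : a < (a + b) / 2 := by linarith
  have hmb : (a + b) / 2 < b := by linarith
  have hmeas : ∀ {u v}, a ≤ u → v ≤ b →
      AEStronglyMeasurable f' (volume.restrict (Ioc u v)) :=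
    fun hu hv => (measurable_deriv f).aestronglyMeasurable.congr
      (ae_restrict_of_forall_mem measurableSet_Ioc fun x hx =>
        (hdiff x (hsub ⟨hu.trans hx.1.le, hx.2.trans hv⟩)).deriv)
  have hint : IntervalIntegrable f' volume a b :=
    (intervalIntegrable_iff_integrableOn_Ioc_of_le hab.le).2 <| memLp_one_iff_integrable.1 <|
      hg.memLp_of_abs_rpow hs₀.le (by linarith) hab (hmeas le_rfl le_rfl) 1
  have H₁ := (hg.subset (Icc_subset_Icc le_rfl hmb.le)).integral_mul_abs_le
    (w := ((a + b) / 2 - ·)) hpq hs₀.le ham (hmeas le_rfl hmb.le) (by fun_prop)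
    fun x hx => sub_nonneg.2 hx.2
  have H₂ := (hg.subset (Icc_subset_Icc ham.le le_rfl)).integral_mul_abs_le
    (w := (· - (a + b) / 2)) hpq hs₀.le hmb (hmeas ham.le le_rfl) (by fun_prop)
    fun x hx => sub_nonneg.2 hx.1
  have hp : -1 < q / (q - 1) := by linarith [hpq.pos]
  have hh : 0 < (b - a) / 2 := by linarith
  rw [integral_sub_left_rpow hp, show (a + b) / 2 - a = (b - a) / 2 by ring,
    holder_half_bound_eq hq (by linarith) hh (by positivity)] at H₁
  rw [integral_sub_right_rpow hp, show b - (a + b) / 2 = (b - a) / 2 by ring,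
    holder_half_bound_eq hq (by linarith) hh (by positivity)] at H₂
  rw [trapezoid_sub_average_eq_integral hab.ne
      (fun x hx => hdiff x (hsub (uIcc_of_le hab.le ▸ hx))) hint,
    abs_mul, abs_of_pos (one_div_pos.2 (sub_pos.2 hab))]
  calc 1 / (b - a) * |∫ x in a..b, (x - (a + b) / 2) * f' x|
      ≤ 1 / (b - a) * ((∫ x in a..(a + b) / 2, ((a + b) / 2 - x) * |f' x|)
          + ∫ x in (a + b) / 2..b, (x - (a + b) / 2) * |f' x|) := by
        gcongr; exact abs_integral_sub_mul_le ham.le hmb.le hint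
    _ ≤ _ := (mul_le_mul_of_nonneg_left (add_le_add H₁ H₂) (by positivity)).trans_eq
        (by field_simp)

theorem sconvex_trapezoid_bound_midpoint
    (s a b c d q : ℝ) (hs : s ∈ Set.Ioo (0:ℝ) 1) (ha : 0 ≤ a) (hab : a < b)
    (hq : 1 < q) (hsub : Set.Icc a b ⊆ Set.Ioo c d)
    (f f' : ℝ → ℝ)
    (hdiff : ∀ x ∈ Set.Ioo c d, HasDerivAt f (f' x) x)
    (hsconv : ∀ u ∈ Set.Icc a b, ∀ v ∈ Set.Icc a b, ∀ t ∈ Set.Icc (0:ℝ) 1,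
      |f' (t * u + (1 - t) * v)| ^ q ≤ t ^ s * |f' u| ^ q + (1 - t) ^ s * |f' v| ^ q) :
    |(f a + f b) / 2 - (1 / (b - a)) * ∫ x in a..b, f x|
      ≤ ((b - a) / 2) * ((q - 1) / (2 * (2 * q - 1))) ^ ((q - 1) / q)
        * (1 / (2 * (s + 1))) ^ (1 / q)
        * ((|f' a| ^ q + |f' ((a + b) / 2)| ^ q) ^ (1 / q)
            + (|f' ((a + b) / 2)| ^ q + |f' b| ^ q) ^ (1 / q)) :=
  sconvex_trapezoid_bound_midpoint_general s a b c d q hs hab hq hsub f f' hdiff hsconv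
end

section
/- If f is s-convex in the second sense on [0,∞) for some s ∈ (0,1) and f is continuous on [a,b] with 0 ≤ a < b, then ∫_a^b f(x) dx = ∫_a^((a+b)/2) (f(x) + f(a+b-x)) dx, and consequently ∫_a^b f(x) dx ≥ 2^(s-1) (b-a) f((a+b)/2). -/
theorem sconvex_reflection_and_lower_bound
    (s a b : ℝ) (hs : s ∈ Set.Ioo (0:ℝ) 1) (ha : 0 ≤ a) (hab : a < b)
    (f : ℝ → ℝ)
    (hsconv : ∀ u v : ℝ, 0 ≤ u → 0 ≤ v → ∀ l ∈ Set.Icc (0:ℝ) 1,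
      f (l * u + (1 - l) * v) ≤ l ^ s * f u + (1 - l) ^ s * f v)
    (hcont : ContinuousOn f (Set.Icc a b)) :
    (∫ x in a..b, f x) = (∫ x in a..((a + b) / 2), (f x + f (a + b - x)))
    ∧ (2:ℝ) ^ (s - 1) * (b - a) * f ((a + b) / 2) ≤ ∫ x in a..b, f x := by
  set m := (a + b) / 2 with hm
  have ham : a ≤ m := by rw [hm]; linarith
  have hmb : m ≤ b := by rw [hm]; linarith
  have hab' : a ≤ b := hab.le
  -- integrability of f on [a,m]
  have hint1 : IntervalIntegrable f MeasureTheory.volume a m :=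
    (hcont.mono (by rw [Set.uIcc_of_le ham]; exact Set.Icc_subset_Icc le_rfl hmb)).intervalIntegrable
  have hint2 : IntervalIntegrable f MeasureTheory.volume m b :=
    (hcont.mono (by rw [Set.uIcc_of_le hmb]; exact Set.Icc_subset_Icc ham le_rfl)).intervalIntegrable
  have hmap : ∀ x ∈ Set.Icc a m, a + b - x ∈ Set.Icc a b := by
    intro x hx
    constructor <;> [linarith [hx.2, hmb]; linarith [hx.1]]
  have hcontg : ContinuousOn (fun x => f (a + b - x)) (Set.uIcc a m) := by
    rw [Set.uIcc_of_le ham]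
    exact hcont.comp ((continuous_const.sub continuous_id).continuousOn) hmap
  have hint3 : IntervalIntegrable (fun x => f (a + b - x)) MeasureTheory.volume a m :=
    hcontg.intervalIntegrable
  have hrefl : (∫ x in a..m, f (a + b - x)) = ∫ x in m..b, f x := by
    rw [intervalIntegral.integral_comp_sub_left f (a + b)]
    norm_num [hm]
    ring_nf
  have hsplit : (∫ x in a..b, f x) = ∫ x in a..m, (f x + f (a + b - x)) := by
    rw [intervalIntegral.integral_add hint1 hint3, hrefl,
      intervalIntegral.integral_add_adjacent_intervals hint1 hint2]
  refine ⟨hsplit, ?_⟩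
  -- pointwise bound
  have hkey : ∀ x ∈ Set.Icc a m, (2:ℝ) ^ s * f m ≤ f x + f (a + b - x) := by
    intro x hx
    have hx0 : 0 ≤ x := le_trans ha hx.1
    have hy0 : 0 ≤ a + b - x := le_trans ha (hmap x hx).1
    have h := hsconv x (a + b - x) hx0 hy0 (1/2) (by norm_num)
    have hmid : (1/2 : ℝ) * x + (1 - 1/2) * (a + b - x) = m := by rw [hm]; ring
    rw [hmid] at h
    have h2 : f m ≤ (1/2 : ℝ) ^ s * (f x + f (a + b - x)) := by
      norm_num at h ⊢; linarith
    have hpow : ((1/2 : ℝ)) ^ s = ((2:ℝ) ^ s)⁻¹ := by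
      rw [one_div, Real.inv_rpow (by norm_num : (0:ℝ) ≤ 2)]
    have h2s : (0:ℝ) < (2:ℝ) ^ s := Real.rpow_pos_of_pos (by norm_num) s
    rw [hpow] at h2
    calc (2:ℝ) ^ s * f m ≤ (2:ℝ) ^ s * (((2:ℝ) ^ s)⁻¹ * (f x + f (a + b - x))) :=
          mul_le_mul_of_nonneg_left h2 h2s.le
      _ = f x + f (a + b - x) := by field_simp
  have hconst : IntervalIntegrable (fun _ : ℝ => (2:ℝ) ^ s * f m) MeasureTheory.volume a m :=
    intervalIntegrable_const
  have hintsum : IntervalIntegrable (fun x => f x + f (a + b - x)) MeasureTheory.volume a m :=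
    hint1.add hint3
  have hmono := intervalIntegral.integral_mono_on ham hconst hintsum hkey
  rw [intervalIntegral.integral_const] at hmono
  have h2s : (0:ℝ) < (2:ℝ) ^ s := Real.rpow_pos_of_pos (by norm_num) s
  have hEq : (m - a) • ((2:ℝ) ^ s * f m) = (2:ℝ) ^ (s - 1) * (b - a) * f m := by
    rw [smul_eq_mul, Real.rpow_sub (by norm_num), Real.rpow_one, hm]
    ring
  rw [hEq] at hmono
  rw [hsplit]
  exact hmono
end
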